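/- arXiv:2211.11128 — 3 statements merged into one kernel-verified Lean document; each statement's English description precedes it below -/
import Mathlib

section
/- Let K be a compact topological group equipped with its Haar probability measure m, let H be a complex Hilbert space, and let π be a unitary representation of K on H (a group homomorphism into the unitary operators with k ↦ π(k)u continuous for every u ∈ H). Assume that the closed linear span of the finite-dimensional π-invariant subspaces of H is all of H, and let D ≥ 1 be a natural number such that every irreducible finite-dimensional π-invariant subspace W of H (i.e. W ≠ 0 and the only π-invariant subspaces of W are 0 and W) has dimension at least D. Then for all u, v ∈ H: ( ∫_K |⟨π(k)u, v⟩|² dm(k) )^{1/2} ≤ ‖u‖·‖v‖ / √D. -/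
open MeasureTheory
open scoped InnerProductSpace ComplexConjugate

lemma cont_integrable {X E : Type*} [TopologicalSpace X] [CompactSpace X] [MeasurableSpace X]
    [OpensMeasurableSpace X] [NormedAddCommGroup E] {μ : Measure X} [IsFiniteMeasure μ]
    {f : X → E} (hf : Continuous f) : Integrable f μ :=
  hf.integrable_of_hasCompactSupport (HasCompactSupport.of_compactSpace f)

lemma onb_sum_sq {E : Type*} [NormedAddCommGroup E] [InnerProductSpace ℂ E] {n : ℕ}
    (b : OrthonormalBasis (Fin n) ℂ E) (x : E) :
    ∑ i, ‖(inner ℂ (b i) x : ℂ)‖ ^ 2 = ‖x‖ ^ 2 := by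
  have h := b.sum_inner_mul_inner x x
  have h2 : ∀ i, (inner ℂ x (b i) : ℂ) * inner ℂ (b i) x = ((‖(inner ℂ (b i) x : ℂ)‖ ^ 2 : ℝ) : ℂ) := by
    intro i
    rw [← inner_conj_symm (b i) x, RCLike.mul_conj, RCLike.norm_conj]; norm_cast
  rw [Finset.sum_congr rfl (fun i _ => h2 i), inner_self_eq_norm_sq_to_K] at h
  exact Complex.ofReal_injective (by push_cast at h ⊢; exact h)

lemma conj_mul_self (z : ℂ) : (starRingEnd ℂ) z * z = ((‖z‖ ^ 2 : ℝ) : ℂ) := by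
  rw [mul_comm, Complex.mul_conj, Complex.normSq_eq_norm_sq]

set_option maxHeartbeats 1000000 in
lemma core {K : Type*} [Group K] [TopologicalSpace K]
    [IsTopologicalGroup K] [CompactSpace K] [MeasurableSpace K] [BorelSpace K]
    (m : Measure K) [m.IsHaarMeasure] [IsProbabilityMeasure m]
    {H : Type*} [NormedAddCommGroup H] [InnerProductSpace ℂ H] [CompleteSpace H]
    (π : K →* (H →L[ℂ] H))
    (hunitary : ∀ k : K, ∀ x y : H, (inner ℂ (π k x) (π k y) : ℂ) = inner ℂ x y)
    (hcont : ∀ u : H, Continuous fun k : K => π k u)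
    (D : ℕ) (hD : 1 ≤ D)
    (hdim : ∀ W : Submodule ℂ H, FiniteDimensional ℂ W → (∀ k : K, ∀ w ∈ W, π k w ∈ W) →
      W ≠ ⊥ →
      (∀ W' : Submodule ℂ H, W' ≤ W → (∀ k : K, ∀ w ∈ W', π k w ∈ W') → W' = ⊥ ∨ W' = W) →
      D ≤ Module.finrank ℂ W)
    (W : Submodule ℂ H) (hWfd : FiniteDimensional ℂ W)
    (hWinv : ∀ k : K, ∀ w ∈ W, π k w ∈ W)
    (u : H) (hu : u ∈ W) (v : H) :
    (∫ k : K, ‖(inner ℂ (π k u) v : ℂ)‖ ^ 2 ∂m) ≤ ‖u‖ ^ 2 * ‖v‖ ^ 2 / D := by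
  haveI := hWfd
  classical
  have hDpos : (0 : ℝ) < D := by exact_mod_cast hD
  by_cases hu0 : u = 0
  · simp only [hu0, map_zero, inner_zero_left, norm_zero]
    rw [show ((0:ℝ)^2) = 0 by ring, integral_zero]
    positivity
  -- basic facts
  have hπnorm : ∀ (k : K) (x : H), ‖π k x‖ = ‖x‖ := by
    intro k x
    have h1 := hunitary k x x
    rw [inner_self_eq_norm_sq_to_K, inner_self_eq_norm_sq_to_K] at h1
    have h2 : (‖π k x‖ : ℝ) ^ 2 = ‖x‖ ^ 2 := by exact_mod_cast h1
    nlinarith [norm_nonneg (π k x), norm_nonneg x, sq_nonneg (‖π k x‖ - ‖x‖)]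
  set φ : K → H := fun k => π k u with hφ
  have hφc : Continuous φ := hcont u
  have hφW : ∀ k, φ k ∈ W := fun k => hWinv k u hu
  set φW : K → W := fun k => (⟨φ k, hφW k⟩ : W) with hφW'
  have hφWc : Continuous φW := hφc.subtype_mk _
  have hφWnorm : ∀ k, ‖φW k‖ = ‖u‖ := fun k => hπnorm k u
  -- integrability facts
  have hint : ∀ x : W, Integrable (fun k => (⟪φW k, x⟫_ℂ) • φW k) m :=
    fun x => cont_integrable (Continuous.smul (f := fun k => ⟪φW k, x⟫_ℂ) (hφWc.inner continuous_const) hφWc)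
  have hintc : ∀ x : W, Integrable (fun k => (⟪φW k, x⟫_ℂ)) m :=
    fun x => cont_integrable (hφWc.inner continuous_const)
  have hints : ∀ x : W, Integrable (fun k => ‖⟪φW k, x⟫_ℂ‖ ^ 2) m :=
    fun x => cont_integrable (((hφWc.inner continuous_const).norm).pow 2)
  -- the averaged operator T on W
  set T : W →ₗ[ℂ] W :=
    { toFun := fun x => ∫ k, (⟪φW k, x⟫_ℂ) • φW k ∂m
      map_add' := by
        intro x y
        simp only [inner_add_right, add_smul]
        exact integral_add (hint x) (hint y)
      map_smul' := by
        intro c x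
        simp only [inner_smul_right, mul_smul, RingHom.id_apply]
        exact integral_smul c _ } with hT
  have hTapp : ∀ x : W, T x = ∫ k, (⟪φW k, x⟫_ℂ) • φW k ∂m := fun _ => rfl
  have hTip : ∀ x y : W, ⟪x, T y⟫_ℂ = ∫ k, (⟪φW k, y⟫_ℂ) * (⟪x, φW k⟫_ℂ) ∂m := by
    intro x y
    rw [hTapp, ← integral_inner (𝕜 := ℂ) (hint y) x]
    simp [inner_smul_right]
  have hquad : ∀ x : W, ⟪x, T x⟫_ℂ = ((∫ k, ‖⟪φW k, x⟫_ℂ‖ ^ 2 ∂m : ℝ) : ℂ) := by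
    intro x
    rw [hTip]
    have heq : (fun k => (⟪φW k, x⟫_ℂ) * (⟪x, φW k⟫_ℂ))
        = fun k => ((‖⟪φW k, x⟫_ℂ‖ ^ 2 : ℝ) : ℂ) := by
      funext k
      have h1 : (⟪φW k, x⟫_ℂ) = (starRingEnd ℂ) (⟪x, φW k⟫_ℂ) := (inner_conj_symm _ _).symm
      rw [h1, conj_mul_self, RCLike.norm_conj]
    rw [heq]
    exact integral_ofReal
  have hsymm : T.IsSymmetric := by
    intro x y
    rw [hTip x y, ← inner_conj_symm (T x) y, hTip y x, ← integral_conj]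
    congr 1; funext k
    rw [map_mul, inner_conj_symm, inner_conj_symm]
    ring
  -- eigenvector basis
  set N := Module.finrank ℂ W with hNdef
  have hN : Module.finrank ℂ W = N := rfl
  set b := hsymm.eigenvectorBasis hN with hb
  set μi := hsymm.eigenvalues hN with hμi
  have heig : ∀ i, T (b i) = (μi i : ℂ) • b i := fun i => hsymm.apply_eigenvectorBasis hN i
  have hdiag : ∀ (x : W) i, b.repr (T x) i = μi i * b.repr x i :=
    fun x i => hsymm.eigenvectorBasis_apply_self_apply hN x i
  -- eigenvalues are integrals
  have hμre : ∀ i, μi i = ∫ k, ‖⟪φW k, b i⟫_ℂ‖ ^ 2 ∂m := by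
    intro i
    have h1 := hquad (b i)
    rw [heig i, inner_smul_right, inner_self_eq_norm_sq_to_K, b.orthonormal.1 i] at h1
    apply Complex.ofReal_injective
    simpa using h1
  have hμnonneg : ∀ i, 0 ≤ μi i := by
    intro i
    rw [hμre i]
    exact integral_nonneg fun k => sq_nonneg _
  -- trace identity
  have htrace : ∑ i, μi i = ‖u‖ ^ 2 := by
    have h1 : ∑ i, μi i = ∫ k, (∑ i, ‖⟪φW k, b i⟫_ℂ‖ ^ 2) ∂m := by
      rw [Finset.sum_congr rfl fun i _ => hμre i]
      exact (integral_finset_sum _ fun i _ => hints (b i)).symm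
    rw [h1]
    have h2 : ∀ k, (∑ i, ‖⟪φW k, b i⟫_ℂ‖ ^ 2) = ‖u‖ ^ 2 := by
      intro k
      have h3 : ∀ i, ‖⟪φW k, b i⟫_ℂ‖ = ‖⟪b i, φW k⟫_ℂ‖ := fun i => norm_inner_symm _ _
      calc (∑ i, ‖⟪φW k, b i⟫_ℂ‖ ^ 2) = ∑ i, ‖⟪b i, φW k⟫_ℂ‖ ^ 2 := by
            exact Finset.sum_congr rfl fun i _ => by rw [h3 i]
        _ = ‖φW k‖ ^ 2 := onb_sum_sq b (φW k)
        _ = ‖u‖ ^ 2 := by rw [hφWnorm k]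
    simp_rw [h2]
    simp
  -- nonemptiness of Fin N
  have hNpos : 0 < N := by
    rw [hNdef]
    rw [Module.finrank_pos_iff_exists_ne_zero (R := ℂ) (M := W)]
    exact ⟨⟨u, hu⟩, fun h => hu0 (by simpa using congrArg (Submodule.subtype W) h)⟩
  haveI : Nonempty (Fin N) := ⟨⟨0, hNpos⟩⟩
  -- top eigenvalue
  set lam := Finset.univ.sup' Finset.univ_nonempty μi with hlam
  have hlam_ge : ∀ i, μi i ≤ lam := fun i => Finset.le_sup' μi (Finset.mem_univ i)
  obtain ⟨i₀, -, hi₀⟩ := Finset.exists_mem_eq_sup' Finset.univ_nonempty μi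
  -- quadratic form bound
  have hrepr : ∀ (x : W) i, b.repr x i = ⟪b i, x⟫_ℂ := fun x i => b.repr_apply_apply x i
  have hquadle : ∀ x : W, (∫ k, ‖⟪φW k, x⟫_ℂ‖ ^ 2 ∂m) ≤ lam * ‖x‖ ^ 2 := by
    intro x
    have h1 : ((∫ k, ‖⟪φW k, x⟫_ℂ‖ ^ 2 ∂m : ℝ) : ℂ) = ⟪x, T x⟫_ℂ := (hquad x).symm
    have h2 : ⟪x, T x⟫_ℂ = ⟪b.repr x, b.repr (T x)⟫_ℂ := (b.repr.inner_map_map x (T x)).symm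
    have h3 : ⟪b.repr x, b.repr (T x)⟫_ℂ = ∑ i, conj (b.repr x i) * (μi i * b.repr x i) := by
      rw [PiLp.inner_apply]
      exact Finset.sum_congr rfl fun i _ => by rw [hdiag x i]; rw [RCLike.inner_apply']
    have h4 : ∀ i, conj (b.repr x i) * ((μi i : ℂ) * b.repr x i)
        = ((μi i * ‖b.repr x i‖ ^ 2 : ℝ) : ℂ) := by
      intro i
      rw [mul_left_comm, conj_mul_self]
      push_cast
      ring
    have h5 : ((∫ k, ‖⟪φW k, x⟫_ℂ‖ ^ 2 ∂m : ℝ) : ℂ)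
        = ((∑ i, μi i * ‖b.repr x i‖ ^ 2 : ℝ) : ℂ) := by
      rw [h1, h2, h3, Finset.sum_congr rfl fun i _ => h4 i]
      push_cast
      rfl
    have h6 : (∫ k, ‖⟪φW k, x⟫_ℂ‖ ^ 2 ∂m) = ∑ i, μi i * ‖b.repr x i‖ ^ 2 :=
      Complex.ofReal_injective h5
    rw [h6]
    have h7 : ∑ i, μi i * ‖b.repr x i‖ ^ 2 ≤ ∑ i, lam * ‖b.repr x i‖ ^ 2 :=
      Finset.sum_le_sum fun i _ => mul_le_mul_of_nonneg_right (hlam_ge i) (sq_nonneg _)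
    have h8 : ∑ i, ‖b.repr x i‖ ^ 2 = ‖x‖ ^ 2 := by
      rw [Finset.sum_congr rfl fun i _ => by rw [hrepr x i]]
      exact onb_sum_sq b x
    calc ∑ i, μi i * ‖b.repr x i‖ ^ 2 ≤ ∑ i, lam * ‖b.repr x i‖ ^ 2 := h7
      _ = lam * ∑ i, ‖b.repr x i‖ ^ 2 := by rw [Finset.mul_sum]
      _ = lam * ‖x‖ ^ 2 := by rw [h8]
  -- reduce v to its projection on W
  set Pv : W := W.orthogonalProjectionOnto v with hPv
  have hPvnorm : ‖Pv‖ ≤ ‖v‖ := by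
    have := (W.orthogonalProjectionOnto).le_opNorm v
    calc ‖Pv‖ ≤ ‖W.orthogonalProjectionOnto‖ * ‖v‖ := this
      _ ≤ 1 * ‖v‖ := mul_le_mul_of_nonneg_right (W.orthogonalProjectionOnto_norm_le) (norm_nonneg v)
      _ = ‖v‖ := one_mul _
  have hproj : ∀ k, (⟪φ k, v⟫_ℂ) = ⟪φW k, Pv⟫_ℂ := by
    intro k
    have h0 : (⟪φW k, Pv⟫_ℂ) = ⟪φ k, (Pv : H)⟫_ℂ := rfl
    rw [h0]
    have h1 : ⟪v - (Pv : H), φ k⟫_ℂ = 0 :=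
      W.starProjection_inner_eq_zero v (φ k) (hφW k)
    have h2 : ⟪φ k, v - (Pv : H)⟫_ℂ = 0 := by
      rw [← inner_conj_symm, h1, map_zero]
    have := inner_sub_right (𝕜 := ℂ) (φ k) v (Pv : H)
    rw [h2] at this
    linear_combination -this
  have hgoal_eq : (∫ k : K, ‖(inner ℂ (π k u) v : ℂ)‖ ^ 2 ∂m)
      = ∫ k, ‖⟪φW k, Pv⟫_ℂ‖ ^ 2 ∂m := by
    congr 1; funext k
    rw [← hproj k]
  rw [hgoal_eq]
  -- case on sign of lam
  by_cases hlam0 : lam ≤ 0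
  · have := hquadle Pv
    have h1 : lam * ‖Pv‖ ^ 2 ≤ 0 := mul_nonpos_of_nonpos_of_nonneg hlam0 (sq_nonneg _)
    calc (∫ k, ‖⟪φW k, Pv⟫_ℂ‖ ^ 2 ∂m) ≤ lam * ‖Pv‖ ^ 2 := this
      _ ≤ 0 := h1
      _ ≤ ‖u‖ ^ 2 * ‖v‖ ^ 2 / D := by positivity
  push_neg at hlam0
  -- key claim : lam ≤ ‖u‖ ^ 2 / D
  have hkey : lam ≤ ‖u‖ ^ 2 / D := by
    -- the commutation relation
    have hintH : ∀ x : H, Integrable (fun k => (⟪φ k, x⟫_ℂ) • φ k) m :=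
      fun x => cont_integrable ((hφc.inner continuous_const).smul hφc)
    have hTcoe : ∀ x : W, ((T x : W) : H) = ∫ k, (⟪φ k, (x : H)⟫_ℂ) • φ k ∂m := by
      intro x
      rw [hTapp]
      have h0 := (W.subtypeL).integral_comp_comm (hint x)
      rw [show ((∫ k, (⟪φW k, x⟫_ℂ) • φW k ∂m : W) : H)
          = W.subtypeL (∫ k, (⟪φW k, x⟫_ℂ) • φW k ∂m) from rfl, ← h0]
      rfl
    have hgcomm : ∀ (k : K) (x : H),
        (∫ k', (⟪φ k', π k x⟫_ℂ) • φ k' ∂m) = π k (∫ k', (⟪φ k', x⟫_ℂ) • φ k' ∂m) := by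
      intro k x
      rw [← ContinuousLinearMap.integral_comp_comm (π k) (hintH x)]
      have hLHS : ∀ k', (⟪φ k', π k x⟫_ℂ) • φ k' = (⟪φ (k⁻¹ * k'), x⟫_ℂ) • φ k' := by
        intro k'
        congr 1
        have h1 := hunitary k⁻¹ (φ k') (π k x)
        have h2 : π k⁻¹ (π k x) = x := by
          rw [← ContinuousLinearMap.comp_apply, ← ContinuousLinearMap.mul_def, ← map_mul,
            inv_mul_cancel, map_one, ContinuousLinearMap.one_apply]
        have h3 : π k⁻¹ (φ k') = φ (k⁻¹ * k') := by
          rw [hφ]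
          show π k⁻¹ (π k' u) = π (k⁻¹ * k') u
          rw [map_mul, ContinuousLinearMap.mul_apply]
        rw [← h1, h2, h3]
      have hRHS : ∀ k', (π k) ((⟪φ k', x⟫_ℂ) • φ k') = (⟪φ k', x⟫_ℂ) • φ (k * k') := by
        intro k'
        rw [_root_.map_smul]
        congr 1
        show π k (π k' u) = π (k * k') u
        rw [map_mul, ContinuousLinearMap.mul_apply]
      simp_rw [hLHS, hRHS]
      have := integral_mul_left_eq_self (μ := m)
        (f := fun k' => (⟪φ (k⁻¹ * k'), x⟫_ℂ) • φ k') k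
      rw [← this]
      congr 1; funext k'
      rw [inv_mul_cancel_left]
    -- the eigenspace, transported to H
    set E' : Submodule ℂ H := (Module.End.eigenspace T (lam : ℂ)).map W.subtype with hE'
    have hE'le : E' ≤ W := Submodule.map_subtype_le _ _
    haveI hE'fd : FiniteDimensional ℂ E' := Submodule.finiteDimensional_of_le hE'le
    have hE'mem : ∀ x : H, x ∈ E' ↔ ∃ w : W, T w = (lam : ℂ) • w ∧ (w : H) = x := by
      intro x
      simp only [hE', Submodule.mem_map, Module.End.mem_eigenspace_iff]
      rfl
    have hE'ne : E' ≠ ⊥ := by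
      rw [Submodule.ne_bot_iff]
      refine ⟨(b i₀ : H), ?_, ?_⟩
      · rw [hE'mem]
        exact ⟨b i₀, by rw [heig i₀, ← hi₀], rfl⟩
      · intro h
        have : (b i₀ : W) ≠ 0 := by
          have := b.orthonormal.1 i₀
          intro h'
          rw [h', norm_zero] at this
          norm_num at this
        exact this (by exact_mod_cast h)
    have hE'inv : ∀ k, ∀ x ∈ E', π k x ∈ E' := by
      intro k x hx
      rw [hE'mem] at hx ⊢
      obtain ⟨w, hw, rfl⟩ := hx
      refine ⟨⟨π k (w : H), hWinv k _ w.2⟩, ?_, rfl⟩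
      apply Subtype.ext
      show ((T _ : W) : H) = ((((lam : ℂ)) • (⟨π k (w : H), _⟩ : W) : W) : H)
      rw [hTcoe]
      have h4 : (∫ k', (⟪φ k', π k (w : H)⟫_ℂ) • φ k' ∂m)
          = π k (∫ k', (⟪φ k', (w : H)⟫_ℂ) • φ k' ∂m) := hgcomm k (w : H)
      rw [h4, ← hTcoe w, hw]
      push_cast
      rw [_root_.map_smul]
    -- dimension count
    set S : Finset (Fin N) := Finset.univ.filter (fun i => μi i = lam) with hS
    have hcard : Module.finrank ℂ E' ≤ S.card := by
      set sp : Submodule ℂ H := Submodule.span ℂ ↑(S.image fun i => ((b i : W) : H)) with hsp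
      haveI : FiniteDimensional ℂ sp :=
        FiniteDimensional.span_of_finite ℂ (Finset.finite_toSet _)
      have hle : E' ≤ sp := by
        intro x hx
        rw [hE'mem] at hx
        obtain ⟨w, hw, rfl⟩ := hx
        have hcoeff : ∀ i, i ∉ S → b.repr w i = 0 := by
          intro i hi
          have h1 : b.repr (T w) i = b.repr ((lam : ℂ) • w) i := by rw [hw]
          rw [hdiag w i] at h1
          have h2 : b.repr ((lam : ℂ) • w) i = (lam : ℂ) * b.repr w i := by
            rw [_root_.map_smul]; rfl
          rw [h2] at h1
          have h3 : ((μi i : ℂ) - (lam : ℂ)) * b.repr w i = 0 := by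
            linear_combination h1
          rcases mul_eq_zero.mp h3 with h4 | h4
          · exfalso
            apply hi
            rw [hS, Finset.mem_filter]
            refine ⟨Finset.mem_univ i, ?_⟩
            have : (μi i : ℂ) = (lam : ℂ) := by linear_combination h4
            exact_mod_cast this
          · exact h4
        have hsum : (w : H) = ∑ i ∈ S, b.repr w i • ((b i : W) : H) := by
          have h2 : (w : H) = ∑ i, b.repr w i • ((b i : W) : H) := by
            conv_lhs => rw [← b.sum_repr w]
            push_cast
            rfl
          rw [h2]
          symm
          apply Finset.sum_subset (Finset.subset_univ S)
          intro i _ hi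
          rw [hcoeff i hi, zero_smul]
        rw [hsum]
        apply Submodule.sum_mem
        intro i hi
        apply Submodule.smul_mem
        apply Submodule.subset_span
        simp only [Finset.coe_image, Set.mem_image, Finset.mem_coe]
        exact ⟨i, hi, rfl⟩
      calc Module.finrank ℂ E' ≤ Module.finrank ℂ sp := Submodule.finrank_mono hle
        _ ≤ (S.image fun i => ((b i : W) : H)).card := by
            simpa [Set.finrank] using finrank_span_finset_le_card (S.image fun i => ((b i : W) : H))
        _ ≤ S.card := Finset.card_image_le
    -- minimal invariant subspace inside E'
    have hDE' : D ≤ Module.finrank ℂ E' := by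
      set s : Set ℕ := {n | ∃ W' : Submodule ℂ H,
        (W' ≤ E' ∧ W' ≠ ⊥ ∧ ∀ k, ∀ w ∈ W', π k w ∈ W') ∧ Module.finrank ℂ W' = n} with hs
      have hsne : s.Nonempty := ⟨Module.finrank ℂ E', E', ⟨le_rfl, hE'ne, hE'inv⟩, rfl⟩
      obtain ⟨W'', ⟨hW''le, hW''ne, hW''inv⟩, hW''rank⟩ := Nat.sInf_mem hsne
      haveI : FiniteDimensional ℂ W'' := Submodule.finiteDimensional_of_le (hW''le.trans hE'le)
      have hirr : ∀ W₃ : Submodule ℂ H, W₃ ≤ W'' → (∀ k, ∀ w ∈ W₃, π k w ∈ W₃) →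
          W₃ = ⊥ ∨ W₃ = W'' := by
        intro W₃ h3le h3inv
        by_cases h3 : W₃ = ⊥
        · exact Or.inl h3
        · right
          have hmem : Module.finrank ℂ W₃ ∈ s := ⟨W₃, ⟨h3le.trans hW''le, h3, h3inv⟩, rfl⟩
          have h4 : sInf s ≤ Module.finrank ℂ W₃ := Nat.sInf_le hmem
          exact Submodule.eq_of_le_of_finrank_le h3le (by omega)
      have hDW'' : D ≤ Module.finrank ℂ W'' :=
        hdim W'' inferInstance hW''inv hW''ne hirr
      exact le_trans hDW'' (Submodule.finrank_mono hW''le)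
    have hDS : (D : ℝ) ≤ S.card := by
      exact_mod_cast le_trans hDE' hcard
    -- sum of eigenvalues bound
    have hsumS : lam * S.card ≤ ∑ i, μi i := by
      have h1 : ∑ i ∈ S, μi i ≤ ∑ i, μi i :=
        Finset.sum_le_sum_of_subset_of_nonneg (Finset.subset_univ S)
          (fun i _ _ => hμnonneg i)
      have h2 : ∑ i ∈ S, μi i = lam * S.card := by
        rw [Finset.sum_congr rfl (fun i hi => (Finset.mem_filter.mp hi).2)]
        rw [Finset.sum_const, nsmul_eq_mul, mul_comm]
      linarith
    have h3 : lam * D ≤ lam * S.card :=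
      mul_le_mul_of_nonneg_left hDS (le_of_lt hlam0)
    rw [htrace] at hsumS
    rw [le_div_iff₀ hDpos]
    linarith
  -- conclude
  calc (∫ k, ‖⟪φW k, Pv⟫_ℂ‖ ^ 2 ∂m) ≤ lam * ‖Pv‖ ^ 2 := hquadle Pv
    _ ≤ (‖u‖ ^ 2 / D) * ‖Pv‖ ^ 2 := mul_le_mul_of_nonneg_right hkey (sq_nonneg _)
    _ ≤ (‖u‖ ^ 2 / D) * ‖v‖ ^ 2 := by
        apply mul_le_mul_of_nonneg_left _ (by positivity)
        have := hPvnorm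
        nlinarith [norm_nonneg (Pv : W), norm_nonneg v]
    _ = ‖u‖ ^ 2 * ‖v‖ ^ 2 / D := by ring

set_option maxHeartbeats 1000000 in
/-- For a unitary representation `π` of a compact group `K` (with Haar probability measure `m`)
on a complex Hilbert space `H` which is the closed span of its finite-dimensional invariant
subspaces, if every irreducible finite-dimensional invariant subspace has dimension at least
`D ≥ 1`, then for all `u v : H`:
`(∫_K |⟨π(k)u, v⟩|² dm)^{1/2} ≤ ‖u‖ ‖v‖ / √D`. -/
theorem matrix_coefficient_L2_bound {K : Type*} [Group K] [TopologicalSpace K]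
    [IsTopologicalGroup K] [CompactSpace K] [MeasurableSpace K] [BorelSpace K]
    (m : Measure K) [m.IsHaarMeasure] [IsProbabilityMeasure m]
    {H : Type*} [NormedAddCommGroup H] [InnerProductSpace ℂ H] [CompleteSpace H]
    (π : K →* (H →L[ℂ] H))
    (hunitary : ∀ k : K, ∀ x y : H, (inner ℂ (π k x) (π k y) : ℂ) = inner ℂ x y)
    (hcont : ∀ u : H, Continuous fun k : K => π k u)
    (hspan : (⨆ (W : Submodule ℂ H) (_ : FiniteDimensional ℂ W ∧
        ∀ k : K, ∀ w ∈ W, π k w ∈ W), W).topologicalClosure = ⊤)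
    (D : ℕ) (hD : 1 ≤ D)
    (hdim : ∀ W : Submodule ℂ H, FiniteDimensional ℂ W → (∀ k : K, ∀ w ∈ W, π k w ∈ W) →
      W ≠ ⊥ →
      (∀ W' : Submodule ℂ H, W' ≤ W → (∀ k : K, ∀ w ∈ W', π k w ∈ W') → W' = ⊥ ∨ W' = W) →
      D ≤ Module.finrank ℂ W)
    (u v : H) :
    Real.sqrt (∫ k : K, ‖(inner ℂ (π k u) v : ℂ)‖ ^ 2 ∂m) ≤ ‖u‖ * ‖v‖ / Real.sqrt D := by
  classical
  have hDpos : (0 : ℝ) < D := by exact_mod_cast hD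
  have hπnorm : ∀ (k : K) (x : H), ‖π k x‖ = ‖x‖ := by
    intro k x
    have h1 := hunitary k x x
    rw [inner_self_eq_norm_sq_to_K, inner_self_eq_norm_sq_to_K] at h1
    have h2 : (‖π k x‖ : ℝ) ^ 2 = ‖x‖ ^ 2 := by exact_mod_cast h1
    nlinarith [norm_nonneg (π k x), norm_nonneg x]
  have hGint : ∀ x : H, Integrable (fun k => ‖(inner ℂ (π k x) v : ℂ)‖ ^ 2) m :=
    fun x => cont_integrable (((hcont x).inner continuous_const).norm.pow 2)
  -- the squared inequality holds for every u
  have main : ∀ w : H, (∫ k : K, ‖(inner ℂ (π k w) v : ℂ)‖ ^ 2 ∂m) ≤ ‖w‖ ^ 2 * ‖v‖ ^ 2 / D := by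
    set P : Submodule ℂ H → Prop :=
      fun W => FiniteDimensional ℂ W ∧ ∀ k : K, ∀ w ∈ W, π k w ∈ W with hP
    set M : Submodule ℂ H := ⨆ (W : Submodule ℂ H) (_ : P W), W with hM
    have hMgood : ∀ x ∈ M, ∃ W : Submodule ℂ H, P W ∧ x ∈ W := by
      intro x hx
      refine Submodule.iSup_induction (motive := fun y => ∃ W : Submodule ℂ H, P W ∧ y ∈ W)
        (fun W => ⨆ (_ : P W), W) hx ?_ ?_ ?_
      · intro W y hy
        change y ∈ ⨆ (_ : P W), W at hy
        by_cases hPW : P W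
        · rw [iSup_pos hPW] at hy
          exact ⟨W, hPW, hy⟩
        · rw [iSup_neg hPW] at hy
          rw [Submodule.mem_bot] at hy
          subst hy
          exact ⟨⊥, ⟨inferInstance, fun k w hw => by
            rw [Submodule.mem_bot] at hw ⊢; rw [hw, map_zero]⟩, Submodule.zero_mem ⊥⟩
      · exact ⟨⊥, ⟨inferInstance, fun k w hw => by
          rw [Submodule.mem_bot] at hw ⊢; rw [hw, map_zero]⟩, Submodule.zero_mem ⊥⟩
      · rintro y z ⟨W₁, ⟨hfd₁, hinv₁⟩, hy⟩ ⟨W₂, ⟨hfd₂, hinv₂⟩, hz⟩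
        haveI := hfd₁; haveI := hfd₂
        refine ⟨W₁ ⊔ W₂, ⟨inferInstance, ?_⟩,
          Submodule.add_mem _ (Submodule.mem_sup_left hy) (Submodule.mem_sup_right hz)⟩
        intro k w hw
        rw [Submodule.mem_sup] at hw ⊢
        obtain ⟨a, ha, b, hb, rfl⟩ := hw
        exact ⟨π k a, hinv₁ k a ha, π k b, hinv₂ k b hb, (map_add _ _ _).symm⟩
    -- the set of good points is closed
    set G : H → ℝ := fun x => ∫ k, ‖(inner ℂ (π k x) v : ℂ)‖ ^ 2 ∂m with hG
    have hGest : ∀ x y : H, |G x - G y| ≤ ‖x - y‖ * ‖v‖ ^ 2 * (‖x‖ + ‖y‖) := by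
      intro x y
      have h1 : G x - G y
          = ∫ k, (‖(inner ℂ (π k x) v : ℂ)‖ ^ 2 - ‖(inner ℂ (π k y) v : ℂ)‖ ^ 2) ∂m :=
        (integral_sub (hGint x) (hGint y)).symm
      have h2 : ∀ k : K, |‖(inner ℂ (π k x) v : ℂ)‖ ^ 2 - ‖(inner ℂ (π k y) v : ℂ)‖ ^ 2|
          ≤ ‖x - y‖ * ‖v‖ ^ 2 * (‖x‖ + ‖y‖) := by
        intro k
        have hab : |‖(inner ℂ (π k x) v : ℂ)‖ - ‖(inner ℂ (π k y) v : ℂ)‖| ≤ ‖x - y‖ * ‖v‖ := by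
          have h3 := abs_norm_sub_norm_le (inner ℂ (π k x) v : ℂ) (inner ℂ (π k y) v : ℂ)
          have h4 : (inner ℂ (π k x) v : ℂ) - inner ℂ (π k y) v = inner ℂ (π k (x - y)) v := by
            rw [map_sub, inner_sub_left]
          rw [h4] at h3
          refine le_trans h3 (le_trans (norm_inner_le_norm _ _) ?_)
          rw [hπnorm]
        have hax : ‖(inner ℂ (π k x) v : ℂ)‖ ≤ ‖x‖ * ‖v‖ := by
          refine le_trans (norm_inner_le_norm _ _) ?_
          rw [hπnorm]
        have hay : ‖(inner ℂ (π k y) v : ℂ)‖ ≤ ‖y‖ * ‖v‖ := by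
          refine le_trans (norm_inner_le_norm _ _) ?_
          rw [hπnorm]
        have hnn : (0:ℝ) ≤ ‖(inner ℂ (π k x) v : ℂ)‖ := norm_nonneg _
        have hnn' : (0:ℝ) ≤ ‖(inner ℂ (π k y) v : ℂ)‖ := norm_nonneg _
        set a := ‖(inner ℂ (π k x) v : ℂ)‖
        set c := ‖(inner ℂ (π k y) v : ℂ)‖
        have habs : |a ^ 2 - c ^ 2| = |a - c| * (a + c) := by
          rw [show a ^ 2 - c ^ 2 = (a - c) * (a + c) by ring, abs_mul,
            abs_of_nonneg (by linarith : (0:ℝ) ≤ a + c)]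
        rw [habs]
        have h5 : a + c ≤ ‖x‖ * ‖v‖ + ‖y‖ * ‖v‖ := by linarith
        calc |a - c| * (a + c) ≤ (‖x - y‖ * ‖v‖) * (‖x‖ * ‖v‖ + ‖y‖ * ‖v‖) :=
              mul_le_mul hab h5 (by linarith) (by positivity)
          _ = ‖x - y‖ * ‖v‖ ^ 2 * (‖x‖ + ‖y‖) := by ring
      rw [h1]
      calc |∫ k, (‖(inner ℂ (π k x) v : ℂ)‖ ^ 2 - ‖(inner ℂ (π k y) v : ℂ)‖ ^ 2) ∂m|
          ≤ ∫ k, |‖(inner ℂ (π k x) v : ℂ)‖ ^ 2 - ‖(inner ℂ (π k y) v : ℂ)‖ ^ 2| ∂m := by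
            simpa [Real.norm_eq_abs] using
              norm_integral_le_integral_norm (μ := m)
                (fun k => ‖(inner ℂ (π k x) v : ℂ)‖ ^ 2 - ‖(inner ℂ (π k y) v : ℂ)‖ ^ 2)
        _ ≤ ∫ _k, (‖x - y‖ * ‖v‖ ^ 2 * (‖x‖ + ‖y‖)) ∂m := by
            refine integral_mono ((hGint x).sub (hGint y)).abs (integrable_const _) h2
        _ = ‖x - y‖ * ‖v‖ ^ 2 * (‖x‖ + ‖y‖) := by simp
    have hGcont : Continuous G := by
      refine continuous_iff_continuousAt.mpr fun x₀ => ?_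
      rw [ContinuousAt, tendsto_iff_dist_tendsto_zero]
      have key : Filter.Tendsto (fun x : H => ‖x - x₀‖ * ‖v‖ ^ 2 * (‖x‖ + ‖x₀‖))
          (nhds x₀) (nhds 0) := by
        have hc : Continuous fun x : H => ‖x - x₀‖ * ‖v‖ ^ 2 * (‖x‖ + ‖x₀‖) := by
          fun_prop
        have h0 : ‖x₀ - x₀‖ * ‖v‖ ^ 2 * (‖x₀‖ + ‖x₀‖) = 0 := by simp
        simpa [h0] using hc.tendsto x₀
      refine squeeze_zero (fun x => dist_nonneg) (fun x => ?_) key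
      rw [Real.dist_eq]
      exact hGest x x₀
    have hclosed : IsClosed {x : H | G x ≤ ‖x‖ ^ 2 * ‖v‖ ^ 2 / D} :=
      isClosed_le hGcont (by fun_prop)
    have hsub : (M : Set H) ⊆ {x : H | G x ≤ ‖x‖ ^ 2 * ‖v‖ ^ 2 / D} := by
      intro x hx
      obtain ⟨W, ⟨hfd, hinv⟩, hxW⟩ := hMgood x hx
      exact core m π hunitary hcont D hD hdim W hfd hinv x hxW v
    intro w
    have hwmem : w ∈ closure (M : Set H) := by
      have h2 : w ∈ M.topologicalClosure := hspan ▸ Submodule.mem_top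
      exact h2
    exact (hclosed.closure_subset_iff.mpr hsub) hwmem
  have h0 : (0:ℝ) ≤ ∫ k : K, ‖(inner ℂ (π k u) v : ℂ)‖ ^ 2 ∂m :=
    integral_nonneg fun k => sq_nonneg _
  refine le_trans (Real.sqrt_le_sqrt (main u)) ?_
  rw [Real.sqrt_div (by positivity) _, ← mul_pow, Real.sqrt_sq (by positivity)]
end

section
/- Let H be a complex Hilbert space and let (V_ℓ)_{ℓ ∈ ℕ} be a sequence of pairwise orthogonal closed subspaces of H whose closed linear span is all of H, with orthogonal projections P_ℓ : H → V_ℓ. Let S be a bounded operator on H and let a, C ≥ 0 be constants such that ‖S v‖ ≤ a‖v‖ for every ℓ and every v ∈ V_ℓ, and |⟨S u, S w⟩| ≤ C·2^{−|ℓ−ℓ'|}·‖u‖·‖w‖ for all ℓ ≠ ℓ' and all u ∈ V_ℓ, w ∈ V_{ℓ'}. Then for every natural number N ≥ 1 and every φ ∈ H: ‖Sφ‖² ≤ ( (2N+1)·a² + 4·C·2^{−N} )·‖φ‖². -/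
open Finset in
/-- Geometric tail bound: if `e` is injective on `u` with values `≥ K`, the sum of `(1/2)^(e m)`
is at most `2 · (1/2)^K`. -/
lemma aux_geom_sum (u : Finset ℕ) (e : ℕ → ℕ) (K : ℕ)
    (he : ∀ x ∈ u, ∀ y ∈ u, e x = e y → x = y) (hK : ∀ m ∈ u, K ≤ e m) :
    ∑ m ∈ u, ((2 : ℝ)⁻¹) ^ (e m) ≤ 2 * (2⁻¹ : ℝ) ^ K := by
  classical
  have hterm : ∀ m ∈ u, ((2 : ℝ)⁻¹) ^ (e m) = (2⁻¹ : ℝ) ^ K * (2⁻¹ : ℝ) ^ (e m - K) := by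
    intro m hm
    rw [← pow_add]
    congr 1
    have := hK m hm
    omega
  rw [Finset.sum_congr rfl hterm, ← Finset.mul_sum]
  have hinj : ∀ x ∈ u, ∀ y ∈ u, e x - K = e y - K → x = y := by
    intro x hx y hy h
    exact he x hx y hy (by have := hK x hx; have := hK y hy; omega)
  have himg : ∑ m ∈ u, ((2 : ℝ)⁻¹) ^ (e m - K)
      = ∑ j ∈ u.image (fun m => e m - K), (2⁻¹ : ℝ) ^ j := (Finset.sum_image hinj).symm
  have hgeo : ∑ j ∈ u.image (fun m => e m - K), (2⁻¹ : ℝ) ^ j ≤ 2 := by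
    have hs : Summable (fun j : ℕ => (2⁻¹ : ℝ) ^ j) :=
      summable_geometric_of_lt_one (by norm_num) (by norm_num)
    have := Summable.sum_le_tsum (u.image (fun m => e m - K))
      (fun j _ => by positivity) hs
    rwa [tsum_geometric_of_lt_one (by norm_num) (by norm_num), show ((1 : ℝ) - 2⁻¹)⁻¹ = 2 by
      norm_num] at this
  calc (2⁻¹ : ℝ) ^ K * ∑ m ∈ u, ((2 : ℝ)⁻¹) ^ (e m - K)
      ≤ (2⁻¹ : ℝ) ^ K * 2 := by
        refine mul_le_mul_of_nonneg_left ?_ (by positivity)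
        rw [himg]; exact hgeo
    _ = 2 * (2⁻¹ : ℝ) ^ K := by ring

open Finset in
/-- Row bound for the almost-orthogonality kernel. -/
lemma aux_row_bound (a C : ℝ) (ha : 0 ≤ a) (hC : 0 ≤ C) (N : ℕ) (ℓ : ℕ) (t : Finset ℕ) :
    ∑ m ∈ t, (if (ℓ - m) + (m - ℓ) ≤ N then a ^ 2
        else C * ((2 : ℝ)⁻¹) ^ ((ℓ - m) + (m - ℓ)))
      ≤ (2 * N + 1) * a ^ 2 + 4 * C * (2⁻¹ : ℝ) ^ N := by
  classical
  rw [Finset.sum_ite]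
  have hpart1 : ∑ _m ∈ t.filter (fun m => (ℓ - m) + (m - ℓ) ≤ N), a ^ 2
      ≤ (2 * N + 1) * a ^ 2 := by
    rw [Finset.sum_const, nsmul_eq_mul]
    have hcard : (t.filter (fun m => (ℓ - m) + (m - ℓ) ≤ N)).card ≤ 2 * N + 1 := by
      have hsub : t.filter (fun m => (ℓ - m) + (m - ℓ) ≤ N) ⊆ Finset.Icc (ℓ - N) (ℓ + N) := by
        intro m hm
        simp only [Finset.mem_filter] at hm
        rw [Finset.mem_Icc]
        omega
      calc (t.filter (fun m => (ℓ - m) + (m - ℓ) ≤ N)).card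
          ≤ (Finset.Icc (ℓ - N) (ℓ + N)).card := Finset.card_le_card hsub
        _ ≤ 2 * N + 1 := by rw [Nat.card_Icc]; omega
    calc ((t.filter (fun m => (ℓ - m) + (m - ℓ) ≤ N)).card : ℝ) * a ^ 2
        ≤ ((2 * N + 1 : ℕ) : ℝ) * a ^ 2 := by
          exact mul_le_mul_of_nonneg_right (by exact_mod_cast hcard) (sq_nonneg a)
      _ = (2 * N + 1) * a ^ 2 := by push_cast; ring
  have hpart2 : ∑ m ∈ t.filter (fun m => ¬ (ℓ - m) + (m - ℓ) ≤ N),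
      C * ((2 : ℝ)⁻¹) ^ ((ℓ - m) + (m - ℓ)) ≤ 4 * C * (2⁻¹ : ℝ) ^ N := by
    set t2 := t.filter (fun m => ¬ (ℓ - m) + (m - ℓ) ≤ N) with ht2
    have hsplit := Finset.sum_filter_add_sum_filter_not t2 (fun m => m < ℓ)
      (fun m => C * ((2 : ℝ)⁻¹) ^ ((ℓ - m) + (m - ℓ)))
    have hb1 : ∑ m ∈ t2.filter (fun m => m < ℓ), C * ((2 : ℝ)⁻¹) ^ ((ℓ - m) + (m - ℓ))
        ≤ C * (2 * (2⁻¹ : ℝ) ^ (N + 1)) := by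
      rw [← Finset.mul_sum]
      refine mul_le_mul_of_nonneg_left ?_ hC
      have hcongr : ∀ m ∈ t2.filter (fun m => m < ℓ),
          ((2 : ℝ)⁻¹) ^ ((ℓ - m) + (m - ℓ)) = ((2 : ℝ)⁻¹) ^ (ℓ - m) := by
        intro m hm
        simp only [ht2, Finset.mem_filter] at hm
        congr 1
        omega
      rw [Finset.sum_congr rfl hcongr]
      refine aux_geom_sum _ (fun m => ℓ - m) (N + 1) ?_ ?_
      · intro x hx y hy h
        simp only [ht2, Finset.mem_filter] at hx hy
        omega
      · intro m hm
        simp only [ht2, Finset.mem_filter] at hm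
        omega
    have hb2 : ∑ m ∈ t2.filter (fun m => ¬ m < ℓ), C * ((2 : ℝ)⁻¹) ^ ((ℓ - m) + (m - ℓ))
        ≤ C * (2 * (2⁻¹ : ℝ) ^ (N + 1)) := by
      rw [← Finset.mul_sum]
      refine mul_le_mul_of_nonneg_left ?_ hC
      have hcongr : ∀ m ∈ t2.filter (fun m => ¬ m < ℓ),
          ((2 : ℝ)⁻¹) ^ ((ℓ - m) + (m - ℓ)) = ((2 : ℝ)⁻¹) ^ (m - ℓ) := by
        intro m hm
        simp only [ht2, Finset.mem_filter] at hm
        congr 1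
        omega
      rw [Finset.sum_congr rfl hcongr]
      refine aux_geom_sum _ (fun m => m - ℓ) (N + 1) ?_ ?_
      · intro x hx y hy h
        simp only [ht2, Finset.mem_filter] at hx hy
        omega
      · intro m hm
        simp only [ht2, Finset.mem_filter] at hm
        omega
    have hpow : (2⁻¹ : ℝ) ^ (N + 1) = 2⁻¹ * (2⁻¹ : ℝ) ^ N := by rw [pow_succ]; ring
    calc ∑ m ∈ t2, C * ((2 : ℝ)⁻¹) ^ ((ℓ - m) + (m - ℓ))
        = ∑ m ∈ t2.filter (fun m => m < ℓ), C * ((2 : ℝ)⁻¹) ^ ((ℓ - m) + (m - ℓ))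
          + ∑ m ∈ t2.filter (fun m => ¬ m < ℓ), C * ((2 : ℝ)⁻¹) ^ ((ℓ - m) + (m - ℓ)) :=
          hsplit.symm
      _ ≤ C * (2 * (2⁻¹ : ℝ) ^ (N + 1)) + C * (2 * (2⁻¹ : ℝ) ^ (N + 1)) := add_le_add hb1 hb2
      _ = 2 * C * (2⁻¹ : ℝ) ^ N := by rw [hpow]; ring
      _ ≤ 4 * C * (2⁻¹ : ℝ) ^ N := by
          have : (0 : ℝ) ≤ C * (2⁻¹ : ℝ) ^ N := by positivity
          nlinarith
  exact add_le_add hpart1 hpart2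

/-- Almost-orthogonality bound: if `(V ℓ)` are pairwise orthogonal closed subspaces of a complex
Hilbert space whose closed span is everything, `‖S v‖ ≤ a ‖v‖` on each `V ℓ`, and
`|⟨S u, S w⟩| ≤ C 2^{-|ℓ-ℓ'|} ‖u‖ ‖w‖` for `u ∈ V ℓ`, `w ∈ V ℓ'`, `ℓ ≠ ℓ'`, then for every
`N ≥ 1` and every `φ`: `‖Sφ‖² ≤ ((2N+1) a² + 4 C 2^{-N}) ‖φ‖²`. -/
theorem almost_orthogonal_operator_bound {H : Type*} [NormedAddCommGroup H]
    [InnerProductSpace ℂ H] [CompleteSpace H]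
    (V : ℕ → Submodule ℂ H) (hclosed : ∀ ℓ, IsClosed (V ℓ : Set H))
    (horth : ∀ ℓ ℓ', ℓ ≠ ℓ' → ∀ u ∈ V ℓ, ∀ w ∈ V ℓ', (inner ℂ u w : ℂ) = 0)
    (hspan : (⨆ ℓ, V ℓ).topologicalClosure = ⊤)
    (S : H →L[ℂ] H) (a C : ℝ) (ha : 0 ≤ a) (hC : 0 ≤ C)
    (hSa : ∀ ℓ, ∀ v ∈ V ℓ, ‖S v‖ ≤ a * ‖v‖)
    (hSC : ∀ ℓ ℓ', ℓ ≠ ℓ' → ∀ u ∈ V ℓ, ∀ w ∈ V ℓ',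
      ‖(inner ℂ (S u) (S w) : ℂ)‖ ≤ C * (2 : ℝ) ^ (-|(ℓ : ℤ) - (ℓ' : ℤ)|) * ‖u‖ * ‖w‖)
    (N : ℕ) (hN : 1 ≤ N) (φ : H) :
    ‖S φ‖ ^ 2 ≤ ((2 * N + 1) * a ^ 2 + 4 * C * (2 : ℝ) ^ (-(N : ℤ))) * ‖φ‖ ^ 2 := by
  classical
  set K : ℝ := (2 * N + 1) * a ^ 2 + 4 * C * (2⁻¹ : ℝ) ^ N with hKdef
  have hK0 : 0 ≤ K := by positivity
  have hKeq : ((2 * (N : ℝ) + 1) * a ^ 2 + 4 * C * (2 : ℝ) ^ (-(N : ℤ))) = K := by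
    rw [hKdef]
    congr 1
    rw [zpow_neg, zpow_natCast, ← inv_pow]
  -- the kernel estimate: bound on each inner product
  have hker : ∀ ℓ m : ℕ, ∀ u ∈ V ℓ, ∀ w ∈ V m,
      ‖(inner ℂ (S u) (S w) : ℂ)‖ ≤
        (if (ℓ - m) + (m - ℓ) ≤ N then a ^ 2
          else C * ((2 : ℝ)⁻¹) ^ ((ℓ - m) + (m - ℓ))) * ‖u‖ * ‖w‖ := by
    intro ℓ m u hu w hw
    by_cases hd : (ℓ - m) + (m - ℓ) ≤ N
    · rw [if_pos hd]
      calc ‖(inner ℂ (S u) (S w) : ℂ)‖ ≤ ‖S u‖ * ‖S w‖ := norm_inner_le_norm _ _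
        _ ≤ (a * ‖u‖) * (a * ‖w‖) :=
            mul_le_mul (hSa ℓ u hu) (hSa m w hw) (norm_nonneg _)
              (mul_nonneg ha (norm_nonneg _))
        _ = a ^ 2 * ‖u‖ * ‖w‖ := by ring
    · rw [if_neg hd]
      have hne : ℓ ≠ m := by omega
      have habs : (2 : ℝ) ^ (-|(ℓ : ℤ) - (m : ℤ)|) = ((2 : ℝ)⁻¹) ^ ((ℓ - m) + (m - ℓ)) := by
        have h1 : |(ℓ : ℤ) - (m : ℤ)| = (((ℓ - m) + (m - ℓ) : ℕ) : ℤ) := by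
          rcases le_total ℓ m with h | h
          · rw [abs_of_nonpos (by omega)]
            push_cast
            omega
          · rw [abs_of_nonneg (by omega)]
            push_cast
            omega
        rw [h1, zpow_neg, zpow_natCast, ← inv_pow]
      calc ‖(inner ℂ (S u) (S w) : ℂ)‖
          ≤ C * (2 : ℝ) ^ (-|(ℓ : ℤ) - (m : ℤ)|) * ‖u‖ * ‖w‖ := hSC ℓ m hne u hu w hw
        _ = C * ((2 : ℝ)⁻¹) ^ ((ℓ - m) + (m - ℓ)) * ‖u‖ * ‖w‖ := by rw [habs]
  -- finite core estimate
  have hcore : ∀ (s : Finset ℕ) (v : ℕ → H), (∀ ℓ, v ℓ ∈ V ℓ) →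
      ‖S (∑ ℓ ∈ s, v ℓ)‖ ^ 2 ≤ K * ∑ ℓ ∈ s, ‖v ℓ‖ ^ 2 := by
    intro s v hv
    set g : ℕ → ℕ → ℝ := fun ℓ m =>
      if (ℓ - m) + (m - ℓ) ≤ N then a ^ 2 else C * ((2 : ℝ)⁻¹) ^ ((ℓ - m) + (m - ℓ)) with hg
    have hg0 : ∀ ℓ m, 0 ≤ g ℓ m := by
      intro ℓ m
      rw [hg]
      dsimp only
      split <;> positivity
    have hgsymm : ∀ ℓ m, g ℓ m = g m ℓ := by
      intro ℓ m
      rw [hg]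
      dsimp only
      rw [Nat.add_comm (ℓ - m) (m - ℓ)]
    -- step 1
    have h1 : ‖S (∑ ℓ ∈ s, v ℓ)‖ ^ 2
        ≤ ∑ ℓ ∈ s, ∑ m ∈ s, ‖(inner ℂ (S (v ℓ)) (S (v m)) : ℂ)‖ := by
      have hmap : S (∑ ℓ ∈ s, v ℓ) = ∑ ℓ ∈ s, S (v ℓ) := map_sum S v s
      have hinn : (inner ℂ (S (∑ ℓ ∈ s, v ℓ)) (S (∑ ℓ ∈ s, v ℓ)) : ℂ)
          = ∑ ℓ ∈ s, ∑ m ∈ s, (inner ℂ (S (v ℓ)) (S (v m)) : ℂ) := by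
        rw [hmap, sum_inner]
        exact Finset.sum_congr rfl fun ℓ _ => inner_sum _ _ _
      calc ‖S (∑ ℓ ∈ s, v ℓ)‖ ^ 2
          = RCLike.re (inner ℂ (S (∑ ℓ ∈ s, v ℓ)) (S (∑ ℓ ∈ s, v ℓ)) : ℂ) :=
            (inner_self_eq_norm_sq (𝕜 := ℂ) _).symm
        _ ≤ ‖(inner ℂ (S (∑ ℓ ∈ s, v ℓ)) (S (∑ ℓ ∈ s, v ℓ)) : ℂ)‖ := RCLike.re_le_norm _
        _ = ‖∑ ℓ ∈ s, ∑ m ∈ s, (inner ℂ (S (v ℓ)) (S (v m)) : ℂ)‖ := by rw [hinn]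
        _ ≤ ∑ ℓ ∈ s, ‖∑ m ∈ s, (inner ℂ (S (v ℓ)) (S (v m)) : ℂ)‖ := norm_sum_le _ _
        _ ≤ ∑ ℓ ∈ s, ∑ m ∈ s, ‖(inner ℂ (S (v ℓ)) (S (v m)) : ℂ)‖ :=
            Finset.sum_le_sum fun ℓ _ => norm_sum_le _ _
    -- step 2 : termwise bound with AM-GM
    have h2 : ∑ ℓ ∈ s, ∑ m ∈ s, ‖(inner ℂ (S (v ℓ)) (S (v m)) : ℂ)‖
        ≤ ∑ ℓ ∈ s, ∑ m ∈ s, g ℓ m * ((‖v ℓ‖ ^ 2 + ‖v m‖ ^ 2) / 2) := by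
      refine Finset.sum_le_sum fun ℓ _ => Finset.sum_le_sum fun m _ => ?_
      have hk := hker ℓ m (v ℓ) (hv ℓ) (v m) (hv m)
      refine hk.trans ?_
      have hamgm : ‖v ℓ‖ * ‖v m‖ ≤ (‖v ℓ‖ ^ 2 + ‖v m‖ ^ 2) / 2 := by nlinarith [sq_nonneg (‖v ℓ‖ - ‖v m‖)]
      have := mul_le_mul_of_nonneg_left hamgm (hg0 ℓ m)
      calc (if (ℓ - m) + (m - ℓ) ≤ N then a ^ 2
            else C * ((2 : ℝ)⁻¹) ^ ((ℓ - m) + (m - ℓ))) * ‖v ℓ‖ * ‖v m‖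
          = g ℓ m * (‖v ℓ‖ * ‖v m‖) := by rw [hg]; ring
        _ ≤ g ℓ m * ((‖v ℓ‖ ^ 2 + ‖v m‖ ^ 2) / 2) := this
    -- step 3 : symmetrize
    have h3 : ∑ ℓ ∈ s, ∑ m ∈ s, g ℓ m * ((‖v ℓ‖ ^ 2 + ‖v m‖ ^ 2) / 2)
        = ∑ ℓ ∈ s, ‖v ℓ‖ ^ 2 * ∑ m ∈ s, g ℓ m := by
      have hsplit : ∀ ℓ m : ℕ, g ℓ m * ((‖v ℓ‖ ^ 2 + ‖v m‖ ^ 2) / 2)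
          = g ℓ m * ‖v ℓ‖ ^ 2 / 2 + g ℓ m * ‖v m‖ ^ 2 / 2 := fun ℓ m => by ring
      simp only [hsplit, Finset.sum_add_distrib]
      have hswap : ∑ ℓ ∈ s, ∑ m ∈ s, g ℓ m * ‖v m‖ ^ 2 / 2
          = ∑ ℓ ∈ s, ∑ m ∈ s, g ℓ m * ‖v ℓ‖ ^ 2 / 2 := by
        rw [Finset.sum_comm]
        refine Finset.sum_congr rfl fun ℓ _ => Finset.sum_congr rfl fun m _ => ?_
        rw [hgsymm ℓ m]
      rw [hswap]
      rw [← Finset.sum_add_distrib]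
      refine Finset.sum_congr rfl fun ℓ _ => ?_
      rw [Finset.mul_sum]
      rw [← Finset.sum_add_distrib]
      refine Finset.sum_congr rfl fun m _ => by ring
    -- step 4 : row bound
    have h4 : ∑ ℓ ∈ s, ‖v ℓ‖ ^ 2 * ∑ m ∈ s, g ℓ m ≤ K * ∑ ℓ ∈ s, ‖v ℓ‖ ^ 2 := by
      rw [Finset.mul_sum]
      refine Finset.sum_le_sum fun ℓ _ => ?_
      have hrow : ∑ m ∈ s, g ℓ m ≤ K := by
        rw [hg, hKdef]
        exact aux_row_bound a C ha hC N ℓ s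
      calc ‖v ℓ‖ ^ 2 * ∑ m ∈ s, g ℓ m ≤ ‖v ℓ‖ ^ 2 * K :=
            mul_le_mul_of_nonneg_left hrow (sq_nonneg _)
        _ = K * ‖v ℓ‖ ^ 2 := by ring
    calc ‖S (∑ ℓ ∈ s, v ℓ)‖ ^ 2
        ≤ ∑ ℓ ∈ s, ∑ m ∈ s, ‖(inner ℂ (S (v ℓ)) (S (v m)) : ℂ)‖ := h1
      _ ≤ ∑ ℓ ∈ s, ∑ m ∈ s, g ℓ m * ((‖v ℓ‖ ^ 2 + ‖v m‖ ^ 2) / 2) := h2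
      _ = ∑ ℓ ∈ s, ‖v ℓ‖ ^ 2 * ∑ m ∈ s, g ℓ m := h3
      _ ≤ K * ∑ ℓ ∈ s, ‖v ℓ‖ ^ 2 := h4
  -- Hilbert sum decomposition of φ
  haveI : ∀ ℓ, CompleteSpace (V ℓ) := fun ℓ => (hclosed ℓ).completeSpace_coe
  have hV : OrthogonalFamily ℂ (fun ℓ => V ℓ) (fun ℓ => (V ℓ).subtypeₗᵢ) := by
    intro i j hij u w
    exact horth i j hij u u.2 w w.2
  have hHS : IsHilbertSum ℂ (fun ℓ => V ℓ) (fun ℓ => (V ℓ).subtypeₗᵢ) :=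
    IsHilbertSum.mkInternal V hV (le_of_eq hspan.symm)
  set w := hHS.linearIsometryEquiv φ with hw
  set v : ℕ → H := fun ℓ => ((w ℓ : V ℓ) : H) with hvdef
  have hvmem : ∀ ℓ, v ℓ ∈ V ℓ := fun ℓ => (w ℓ).2
  have hsum : HasSum v φ := by
    have := hHS.hasSum_linearIsometryEquiv_symm w
    rwa [hw, LinearIsometryEquiv.symm_apply_apply] at this
  -- Parseval/Bessel
  have ht : Filter.Tendsto (fun s : Finset ℕ => ∑ ℓ ∈ s, v ℓ) Filter.atTop (nhds φ) := hsum
  have ht2 : Filter.Tendsto (fun s : Finset ℕ => ‖∑ ℓ ∈ s, v ℓ‖ ^ 2) Filter.atTop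
      (nhds (‖φ‖ ^ 2)) := ht.norm.pow 2
  have h2 : ∀ s : Finset ℕ, ‖∑ ℓ ∈ s, v ℓ‖ ^ 2 = ∑ ℓ ∈ s, ‖v ℓ‖ ^ 2 := by
    intro s
    have := hV.norm_sum (fun ℓ => w ℓ) s
    simpa using this
  have hA : HasSum (fun ℓ => ‖v ℓ‖ ^ 2) (‖φ‖ ^ 2) := ht2.congr h2
  have hBessel : ∀ s : Finset ℕ, ∑ ℓ ∈ s, ‖v ℓ‖ ^ 2 ≤ ‖φ‖ ^ 2 := fun s =>
    sum_le_hasSum s (fun ℓ _ => sq_nonneg _) hA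
  -- pass to the limit
  have htS : Filter.Tendsto (fun s : Finset ℕ => ‖S (∑ ℓ ∈ s, v ℓ)‖ ^ 2) Filter.atTop
      (nhds (‖S φ‖ ^ 2)) := by
    have h := ((S.continuous.tendsto φ).comp ht).norm.pow 2
    exact h.congr fun s => rfl
  rw [hKeq]
  refine le_of_tendsto htS (Filter.Eventually.of_forall fun s => ?_)
  calc ‖S (∑ ℓ ∈ s, v ℓ)‖ ^ 2 ≤ K * ∑ ℓ ∈ s, ‖v ℓ‖ ^ 2 := hcore s v hvmem
    _ ≤ K * ‖φ‖ ^ 2 := mul_le_mul_of_nonneg_left (hBessel s) hK0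
end

section
/- Let X be a compact topological space, E a complex Banach space, and S : X → B(E) a map into the bounded linear operators on E that is continuous with respect to the operator norm. Suppose c > 0 is such that the spectral radius of S(x) is strictly less than c for every x ∈ X. Then there exists a natural number N such that for every n ≥ N and every x ∈ X: ‖S(x)ⁿ‖^{1/n} < c. -/
open scoped ENNReal
open Filter Topology

lemma aux_rpow_one_div_tendsto {C : ℝ} (hC : 0 < C) :
    Tendsto (fun n : ℕ => C ^ ((1:ℝ)/n)) atTop (𝓝 1) := by
  have h1 : (fun n : ℕ => C ^ ((1:ℝ)/n)) = fun n : ℕ => Real.exp (Real.log C * ((1:ℝ)/n)) :=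
    funext fun n => Real.rpow_def_of_pos hC _
  rw [h1]
  have h2 : Tendsto (fun n : ℕ => Real.log C * ((1:ℝ)/n)) atTop (𝓝 0) := by
    simpa using (tendsto_const_nhds (x := Real.log C)).mul tendsto_one_div_atTop_nhds_zero_nat
  simpa [Function.comp_def] using (Real.continuous_exp.tendsto 0).comp h2

/-- If `X` is compact, `S : X → B(E)` is operator-norm continuous, and the spectral radius of
`S x` is `< c` for every `x`, then there is `N` such that for all `n ≥ N` and all `x`,
`‖S(x)ⁿ‖^(1/n) < c`. -/
theorem uniform_gelfand_bound {X : Type*} [TopologicalSpace X] [CompactSpace X]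
    {E : Type*} [NormedAddCommGroup E] [NormedSpace ℂ E] [CompleteSpace E]
    (S : X → E →L[ℂ] E) (hS : Continuous S) (c : ℝ) (hc : 0 < c)
    (hrad : ∀ x : X, spectralRadius ℂ (S x) < ENNReal.ofReal c) :
    ∃ N : ℕ, ∀ n : ℕ, N ≤ n → ∀ x : X, ‖(S x) ^ n‖ ^ ((1 : ℝ) / n) < c := by
  rcases isEmpty_or_nonempty X with hX | hX
  · exact ⟨1, fun n _ x => (IsEmpty.false x).elim⟩
  -- choose per-point exponent
  have key : ∀ x : X, ∃ m : ℕ, 1 ≤ m ∧ ‖(S x) ^ m‖ ^ ((1:ℝ)/m) < c := by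
    intro x
    have h := (spectrum.pow_norm_pow_one_div_tendsto_nhds_spectralRadius
      (S x)).eventually_lt_const (hrad x)
    obtain ⟨n, hn2, hn1⟩ := (h.and (eventually_ge_atTop 1)).exists
    exact ⟨n, hn1, (ENNReal.ofReal_lt_ofReal_iff hc).mp hn2⟩
  choose m hm1 hmc using key
  have hmpos : ∀ x, (0:ℝ) < (m x : ℝ) := fun x => by exact_mod_cast hm1 x
  -- ‖(S x)^(m x)‖ < c ^ (m x)
  have hlt : ∀ x, ‖(S x) ^ (m x)‖ < c ^ (m x) := by
    intro x
    have h := Real.rpow_lt_rpow (Real.rpow_nonneg (norm_nonneg _) _) (hmc x) (hmpos x)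
    rwa [← Real.rpow_mul (norm_nonneg _), one_div_mul_cancel (hmpos x).ne', Real.rpow_one,
      Real.rpow_natCast] at h
  -- midpoint b
  set b : X → ℝ := fun x => (‖(S x) ^ (m x)‖ + c ^ (m x)) / 2 with hb_def
  have hbpos : ∀ x, 0 < b x := fun x => by
    have := pow_pos hc (m x); have := norm_nonneg ((S x) ^ (m x)); simp only [hb_def]; linarith
  have hb_gt : ∀ x, ‖(S x) ^ (m x)‖ < b x := fun x => by
    have := hlt x; simp only [hb_def]; linarith
  have hb_lt : ∀ x, b x < c ^ (m x) := fun x => by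
    have := hlt x; simp only [hb_def]; linarith
  -- β
  set β : X → ℝ := fun x => (b x) ^ ((1:ℝ)/(m x)) with hβ_def
  have hβpos : ∀ x, 0 < β x := fun x => Real.rpow_pos_of_pos (hbpos x) _
  have hβm : ∀ x, (β x) ^ (m x) = b x := by
    intro x
    rw [hβ_def, ← Real.rpow_natCast ((b x) ^ ((1:ℝ)/(m x))) (m x),
      ← Real.rpow_mul (hbpos x).le, one_div_mul_cancel (hmpos x).ne', Real.rpow_one]
  have hβc : ∀ x, β x < c := by
    intro x
    have h := Real.rpow_lt_rpow (hbpos x).le (hb_lt x) (one_div_pos.mpr (hmpos x))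
    rwa [← Real.rpow_natCast c (m x), ← Real.rpow_mul hc.le,
      mul_one_div_cancel (hmpos x).ne', Real.rpow_one] at h
  -- global bound M
  obtain ⟨x₀, -, hx₀⟩ := isCompact_univ.exists_isMaxOn Set.univ_nonempty
    ((continuous_norm.comp hS)).continuousOn
  set M : ℝ := max 1 (max c ‖S x₀‖) with hM_def
  have hM1 : (1:ℝ) ≤ M := le_max_left _ _
  have hMc : c ≤ M := le_trans (le_max_left _ _) (le_max_right _ _)
  have hMS : ∀ y, ‖S y‖ ≤ M := fun y =>
    le_trans (hx₀ (Set.mem_univ y)) (le_trans (le_max_right _ _) (le_max_right _ _))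
  have hβM : ∀ x, β x ≤ M := fun x => le_trans (hβc x).le hMc
  have hMβ1 : ∀ x, 1 ≤ M / β x := fun x => (one_le_div (hβpos x)).mpr (hβM x)
  -- open cover
  set U : X → Set X := fun x => {y | ‖(S y) ^ (m x)‖ < b x} with hU_def
  have hUopen : ∀ x, IsOpen (U x) :=
    fun x => isOpen_lt ((hS.pow (m x)).norm) continuous_const
  have hUmem : ∀ x, x ∈ U x := fun x => hb_gt x
  obtain ⟨t, ht⟩ := isCompact_univ.elim_finite_subcover U hUopen
    (fun x _ => Set.mem_iUnion.mpr ⟨x, hUmem x⟩)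
  -- N per point
  set C : X → ℝ := fun x => (M / β x) ^ (m x) with hC_def
  have hC1 : ∀ x, 1 ≤ C x := fun x => one_le_pow₀ (hMβ1 x)
  have hNx : ∀ x : X, ∃ N : ℕ, ∀ n ≥ N, β x * (C x) ^ ((1:ℝ)/n) < c := by
    intro x
    have htd : Tendsto (fun n : ℕ => β x * (C x) ^ ((1:ℝ)/n)) atTop (𝓝 (β x)) := by
      simpa using tendsto_const_nhds.mul (aux_rpow_one_div_tendsto (lt_of_lt_of_le one_pos (hC1 x)))
    exact eventually_atTop.mp (htd.eventually_lt_const (hβc x))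
  choose Nf hNf using hNx
  refine ⟨max 1 (t.sup Nf), fun n hn x => ?_⟩
  have hn1 : 1 ≤ n := le_trans (le_max_left _ _) hn
  have hnR : (0:ℝ) < (n:ℝ) := by exact_mod_cast hn1
  obtain ⟨i, hi, hxU⟩ := Set.mem_iUnion₂.mp (ht (Set.mem_univ x))
  -- core estimate: ‖(S x)^n‖ ≤ β i ^ n * C i
  have hcore : ‖(S x) ^ n‖ ≤ (β i) ^ n * C i := by
    set T := S x
    set q := n / m i
    set r := n % m i
    have hqr : m i * q + r = n := Nat.div_add_mod n (m i)
    have hrm : r < m i := Nat.mod_lt _ (hm1 i)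
    have hstep : ‖T ^ n‖ ≤ (b i) ^ q * M ^ r := by
      rcases Nat.eq_zero_or_pos q with hq | hq
      · -- n = r
        have hnr : n = r := by rw [hq, Nat.mul_zero, zero_add] at hqr; omega
        have hrpos : 0 < r := by omega
        calc ‖T ^ n‖ = ‖T ^ r‖ := by rw [hnr]
          _ ≤ ‖T‖ ^ r := norm_pow_le' T hrpos
          _ ≤ M ^ r := pow_le_pow_left₀ (norm_nonneg _) (hMS x) r
          _ = (b i) ^ q * M ^ r := by rw [hq, pow_zero, one_mul]
      · rcases Nat.eq_zero_or_pos r with hr | hr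
        · have hnq : n = m i * q := by omega
          calc ‖T ^ n‖ = ‖(T ^ (m i)) ^ q‖ := by rw [hnq, pow_mul]
            _ ≤ ‖T ^ (m i)‖ ^ q := norm_pow_le' _ hq
            _ ≤ (b i) ^ q := pow_le_pow_left₀ (norm_nonneg _) hxU.le q
            _ = (b i) ^ q * M ^ r := by rw [hr, pow_zero, mul_one]
        · calc ‖T ^ n‖ = ‖(T ^ (m i)) ^ q * T ^ r‖ := by rw [← pow_mul, ← pow_add, hqr]
            _ ≤ ‖(T ^ (m i)) ^ q‖ * ‖T ^ r‖ := norm_mul_le _ _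
            _ ≤ ‖T ^ (m i)‖ ^ q * ‖T‖ ^ r :=
                mul_le_mul (norm_pow_le' _ hq) (norm_pow_le' _ hr) (norm_nonneg _)
                  (pow_nonneg (norm_nonneg _) _)
            _ ≤ (b i) ^ q * M ^ r :=
                mul_le_mul (pow_le_pow_left₀ (norm_nonneg _) hxU.le q)
                  (pow_le_pow_left₀ (norm_nonneg _) (hMS x) r)
                  (pow_nonneg (norm_nonneg _) _) (pow_nonneg (hbpos i).le _)
    have hbq : (b i) ^ q * M ^ r = (β i) ^ (n - r) * M ^ r := by
      rw [← hβm i, ← pow_mul]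
      congr 2
      omega
    have hfin : (β i) ^ (n - r) * M ^ r ≤ (β i) ^ n * C i := by
      have h1 : (β i) ^ n * (M / β i) ^ r = (β i) ^ (n - r) * M ^ r := by
        have : (β i) ^ n = (β i) ^ (n - r) * (β i) ^ r := by
          rw [← pow_add]; congr 1; omega
        rw [this, mul_assoc, ← mul_pow, mul_div_cancel₀ _ (hβpos i).ne']
      rw [← h1, hC_def]
      exact mul_le_mul_of_nonneg_left
        (pow_le_pow_right₀ (hMβ1 i) hrm.le) (pow_nonneg (hβpos i).le _)
    calc ‖T ^ n‖ ≤ (b i) ^ q * M ^ r := hstep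
      _ = (β i) ^ (n - r) * M ^ r := hbq
      _ ≤ (β i) ^ n * C i := hfin
  -- conclude
  have hCpos : (0:ℝ) < C i := lt_of_lt_of_le one_pos (hC1 i)
  have hrw : ((β i) ^ n * C i) ^ ((1:ℝ)/n) = β i * (C i) ^ ((1:ℝ)/n) := by
    rw [Real.mul_rpow (pow_nonneg (hβpos i).le _) hCpos.le]
    congr 1
    rw [← Real.rpow_natCast (β i) n, ← Real.rpow_mul (hβpos i).le,
      mul_one_div_cancel hnR.ne', Real.rpow_one]
  calc ‖(S x) ^ n‖ ^ ((1:ℝ)/n) ≤ ((β i) ^ n * C i) ^ ((1:ℝ)/n) :=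
        Real.rpow_le_rpow (norm_nonneg _) hcore (by positivity)
    _ = β i * (C i) ^ ((1:ℝ)/n) := hrw
    _ < c := hNf i n (le_trans (le_trans (Finset.le_sup hi) (le_max_right _ _)) hn)
end
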